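/- The subspace vanishing polynomials defined by the Cantor basis and by the tower basis coincide: if (β_i) is a Cantor basis and (v_i) the tower basis of a common field F of characteristic 2, and both satisfy s_k(β_k) = 1 (resp. s_k(v_k) = 1) with s_{k+1} = s_k² + s_k and s₁(x) = x²+x, then for every k, span{β₀,…,β_{k−1}} = span{v₀,…,v_{k−1}} and the polynomials ∏_{a∈V_k}(x−a) agree. -/

import Mathlib

/-!
For `w = β` and for `w = v`, the span of `w₀,…,w_{k−1}` is the root set of the same polynomial
`s_k = (X² + X)^∘k`. Indeed `s₁` is additive in characteristic 2 and `s₁(1) = 0`, so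
`s_k(w_j) = s_{k-j-1}(s₁(s_j(w_j))) = 0` for `j < k`, whence every subset sum of `w₀,…,w_{k−1}` is a
root of `s_k`. By linear independence there are `2^k` distinct subset sums, and `s_k` has degree
`2^k`, so they exhaust its roots.
-/

open Polynomial Finset

noncomputable def subspacePoly (R : Type*) [CommSemiring R] (k : ℕ) : R[X] :=
  (fun p : R[X] => p ^ 2 + p)^[k] X

theorem eval_subspacePoly {R : Type*} [CommSemiring R] (k : ℕ) (y : R) :
    (subspacePoly R k).eval y = (fun z : R => z ^ 2 + z)^[k] y := by
  induction k with
  | zero => simp [subspacePoly]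
  | succ k ih =>
    rw [subspacePoly, Function.iterate_succ_apply', ← subspacePoly, Function.iterate_succ_apply',
      ← ih]
    simp

theorem subspacePoly_monic_and_natDegree (R : Type*) [CommRing R] [Nontrivial R] (k : ℕ) :
    (subspacePoly R k).Monic ∧ (subspacePoly R k).natDegree = 2 ^ k := by
  induction k with
  | zero => exact ⟨monic_X, natDegree_X⟩
  | succ k ih =>
    obtain ⟨hmonic, hdeg⟩ := ih
    have hdeg_sq : (subspacePoly R k ^ 2).natDegree = 2 ^ (k + 1) := by
      rw [hmonic.natDegree_pow, hdeg, pow_succ, mul_comm]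
    have hlt : (subspacePoly R k).natDegree < (subspacePoly R k ^ 2).natDegree := by
      rw [hdeg_sq, hdeg]
      exact Nat.pow_lt_pow_succ one_lt_two
    rw [subspacePoly, Function.iterate_succ_apply', ← subspacePoly]
    exact ⟨(hmonic.pow 2).add_of_left (degree_lt_degree hlt),
      (natDegree_add_eq_left_of_natDegree_lt hlt).trans hdeg_sq⟩

section CharTwo

variable (F : Type*) [Field F] [CharP F 2]

def sqAddSelfHom : AddMonoid.End F where
  toFun z := z ^ 2 + z
  map_zero' := by simp
  map_add' y z := by rw [CharTwo.add_sq]; ring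

variable {F}

theorem iterate_sq_add_self_sum (k : ℕ) (S : Finset ℕ) (w : ℕ → F) :
    (fun z : F => z ^ 2 + z)^[k] (∑ j ∈ S, w j) = ∑ j ∈ S, (fun z : F => z ^ 2 + z)^[k] (w j) :=
  map_sum (sqAddSelfHom F ^ k) w S

theorem iterate_sq_add_self_eq_zero_of_lt {w : ℕ → F}
    (hw : ∀ j, (fun z : F => z ^ 2 + z)^[j] (w j) = 1) {j k : ℕ} (hjk : j < k) :
    (fun z : F => z ^ 2 + z)^[k] (w j) = 0 := by
  obtain ⟨m, rfl⟩ := Nat.exists_eq_add_of_lt hjk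
  rw [add_assoc, add_comm, Function.iterate_add_apply, Function.iterate_add_apply, hw j,
    Function.iterate_one, one_pow, CharTwo.add_self_eq_zero]
  exact Function.iterate_fixed (sqAddSelfHom F).map_zero m

theorem sum_injective_of_sum_eq_zero {w : ℕ → F}
    (hindep : ∀ S : Finset ℕ, ∑ j ∈ S, w j = 0 → S = ∅) :
    Function.Injective (fun S : Finset ℕ => ∑ j ∈ S, w j) := by
  intro S T hST
  have hdiff : ∑ j ∈ (T \ S) ∪ (S \ T), w j = 0 := by
    rw [sum_union disjoint_sdiff_sdiff, ← CharTwo.sub_eq_add, sum_sdiff_sub_sum_sdiff]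
    exact sub_eq_zero.mpr hST.symm
  obtain ⟨hTS, hSdT⟩ := union_eq_empty.mp (hindep _ hdiff)
  exact (sdiff_eq_empty_iff_subset.mp hSdT).antisymm (sdiff_eq_empty_iff_subset.mp hTS)

end CharTwo

section SubsetSums

variable {F : Type*} [Field F] [CharP F 2] [DecidableEq F]

def subsetSums (w : ℕ → F) (k : ℕ) : Finset F :=
  (range k).powerset.image fun S => ∑ j ∈ S, w j

theorem subsetSums_subset_roots {w : ℕ → F} (hw : ∀ j, (fun z : F => z ^ 2 + z)^[j] (w j) = 1)
    (k : ℕ) : subsetSums w k ⊆ (subspacePoly F k).roots.toFinset := by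
  intro a ha
  obtain ⟨S, hS, rfl⟩ := mem_image.mp ha
  rw [Multiset.mem_toFinset, mem_roots (subspacePoly_monic_and_natDegree F k).1.ne_zero, IsRoot,
    eval_subspacePoly, iterate_sq_add_self_sum]
  exact sum_eq_zero fun j hj =>
    iterate_sq_add_self_eq_zero_of_lt hw (mem_range.mp (mem_powerset.mp hS hj))

theorem card_subsetSums {w : ℕ → F} (hindep : ∀ S : Finset ℕ, ∑ j ∈ S, w j = 0 → S = ∅)
    (k : ℕ) : #(subsetSums w k) = 2 ^ k := by
  rw [subsetSums, card_image_of_injective _ (sum_injective_of_sum_eq_zero hindep),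
    card_powerset, card_range]

theorem subsetSums_eq_roots {w : ℕ → F} (hw : ∀ j, (fun z : F => z ^ 2 + z)^[j] (w j) = 1)
    (hindep : ∀ S : Finset ℕ, ∑ j ∈ S, w j = 0 → S = ∅) (k : ℕ) :
    subsetSums w k = (subspacePoly F k).roots.toFinset := by
  refine eq_of_subset_of_card_le (subsetSums_subset_roots hw k) ?_
  calc #(subspacePoly F k).roots.toFinset
      ≤ Multiset.card (subspacePoly F k).roots := Multiset.toFinset_card_le _
    _ ≤ (subspacePoly F k).natDegree := card_roots' _
    _ = #(subsetSums w k) := by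
      rw [(subspacePoly_monic_and_natDegree F k).2, card_subsetSums hindep]

end SubsetSums

theorem stmt_16_general (F : Type*) [Field F] [CharP F 2] [DecidableEq F]
    (β : ℕ → F)
    (hβindep : ∀ S : Finset ℕ, (∑ j ∈ S, β j) = 0 → S = ∅)
    (v : ℕ → F)
    (hvindep : ∀ S : Finset ℕ, (∑ j ∈ S, v j) = 0 → S = ∅)
    (s1 : F → F) (hs1 : ∀ y, s1 y = y ^ 2 + y)
    (hsβ : ∀ k, s1^[k] (β k) = 1) (hsv : ∀ k, s1^[k] (v k) = 1) :
    ∀ k, ((Finset.range k).powerset).image (fun S => ∑ j ∈ S, β j)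
          = ((Finset.range k).powerset).image (fun S => ∑ j ∈ S, v j) ∧
      ∀ y : F,
        ∏ a ∈ ((Finset.range k).powerset).image (fun S => ∑ j ∈ S, β j), (y - a)
          = ∏ a ∈ ((Finset.range k).powerset).image (fun S => ∑ j ∈ S, v j), (y - a) := by
  obtain rfl : s1 = fun z => z ^ 2 + z := funext hs1
  intro k
  have hspan : subsetSums β k = subsetSums v k := by
    rw [subsetSums_eq_roots hsβ hβindep, subsetSums_eq_roots hsv hvindep]
  exact ⟨hspan, fun y => congrArg (∏ a ∈ ·, (y - a)) hspan⟩

/-- The subspace vanishing polynomials defined by a Cantor basis and by the tower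
basis coincide.  Let `F` be a field of characteristic 2 containing a Cantor basis
`(β_i)` (`β₀ = 1`, `β_i² + β_i = β_{i−1}`, `GF(2)`-linearly independent) and the
tower basis `(v_i)` (built from elements `x_j` with
`x_{m+1}² + x_{m+1} = x₁⋯x_m`, `v_k = ∏_{j : bit j of k} x_{j+1}`, linearly
independent), where both satisfy `s_k(β_k) = 1` and `s_k(v_k) = 1` for the
iterates `s_k` of `s₁(x) = x² + x`.  Then for every `k`,
`span{β₀,…,β_{k−1}} = span{v₀,…,v_{k−1}}` and the vanishing polynomials
`∏_{a ∈ V_k}(x − a)` agree. -/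
theorem stmt_16 (F : Type*) [Field F] [CharP F 2] [DecidableEq F]
    (β : ℕ → F) (hβ0 : β 0 = 1) (hβ : ∀ i, β (i + 1) ^ 2 + β (i + 1) = β i)
    (hβindep : ∀ S : Finset ℕ, (∑ j ∈ S, β j) = 0 → S = ∅)
    (x : ℕ → F)
    (hx : ∀ m, x (m + 1) ^ 2 + x (m + 1) = ∏ j ∈ Finset.range m, x (j + 1))
    (v : ℕ → F)
    (hv : ∀ k, v k = ∏ j ∈ Finset.range k, if k.testBit j then x (j + 1) else 1)
    (hvindep : ∀ S : Finset ℕ, (∑ j ∈ S, v j) = 0 → S = ∅)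
    (s1 : F → F) (hs1 : ∀ y, s1 y = y ^ 2 + y)
    (hsβ : ∀ k, s1^[k] (β k) = 1) (hsv : ∀ k, s1^[k] (v k) = 1) :
    ∀ k, ((Finset.range k).powerset).image (fun S => ∑ j ∈ S, β j)
          = ((Finset.range k).powerset).image (fun S => ∑ j ∈ S, v j) ∧
      ∀ y : F,
        ∏ a ∈ ((Finset.range k).powerset).image (fun S => ∑ j ∈ S, β j), (y - a)
          = ∏ a ∈ ((Finset.range k).powerset).image (fun S => ∑ j ∈ S, v j), (y - a) :=
  stmt_16_general F β hβindep v hvindep s1 hs1 hsβ hsv
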